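/- arXiv:1111.1823 — 2 statements merged into one kernel-verified Lean document; each statement's English description precedes it below -/
import Mathlib

section
/- Let X be a code over A with finite deciphering delay and let y = y₁y₂⋯ ∈ X^ω with yᵢ ∈ X. If y is alternating, then ψ_X(y) is not ultimately periodic. -/
open List

/-- Right palindromic closure: `w⁺ = u Q u~` where `Q` is the longest palindromic
suffix of `w = uQ`; equivalently the shortest palindrome having `w` as a prefix. -/
noncomputable def palClosure {A : Type*} (w : List A) : List A :=
  letI : DecidablePred fun k => (w.drop k).reverse = w.drop k :=
    fun _ => Classical.propDecidable _
  w ++ (w.take (Nat.find (⟨w.length, by simp⟩ :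
    ∃ k, (w.drop k).reverse = w.drop k))).reverse

/-- The palindromization map `ψ_X` relative to a code `X`, evaluated on the
(unique) `X`-factorization `l = [x₁, …, xₙ]` of a word of `X*`. -/
noncomputable def psiList {A : Type*} (l : List (List A)) : List A :=
  l.foldl (fun p x => palClosure (p ++ x)) []

/-- The (usual) palindromization map `ψ` on words, letter by letter. -/
noncomputable def psiWord {A : Type*} (w : List A) : List A :=
  w.foldl (fun p a => palClosure (p ++ [a])) []

/-- `X` is a code: nonempty words with unique factorization over `X`. -/
def IsCode {A : Type*} (X : Set (List A)) : Prop :=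
  (∀ x ∈ X, x ≠ []) ∧
  ∀ l l' : List (List A), (∀ w ∈ l, w ∈ X) → (∀ w ∈ l', w ∈ X) →
    l.flatten = l'.flatten → l = l'

/-- `X` is a prefix code: nonempty words, none a proper prefix of another. -/
def IsPrefixCode {A : Type*} (X : Set (List A)) : Prop :=
  (∀ x ∈ X, x ≠ []) ∧ ∀ x ∈ X, ∀ y ∈ X, x <+: y → x = y

/-- `X` is a maximal prefix code over `A`. -/
def IsMaximalPrefixCode {A : Type*} (X : Set (List A)) : Prop :=
  IsPrefixCode X ∧ ∀ Y : Set (List A), IsPrefixCode Y → X ⊆ Y → X = Y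

/-- `w ∈ X*`. -/
def InStar {A : Type*} (X : Set (List A)) (w : List A) : Prop :=
  ∃ l : List (List A), (∀ u ∈ l, u ∈ X) ∧ l.flatten = w

/-- The finite word `w` is a prefix of the infinite word `s`. -/
def PrefixOfInf {A : Type*} (w : List A) (s : ℕ → A) : Prop :=
  ∀ i : ℕ, ∀ h : i < w.length, w.get ⟨i, h⟩ = s i

/-- The finite word `w` is a factor of the infinite word `s`. -/
def FactorOfInf {A : Type*} (w : List A) (s : ℕ → A) : Prop :=
  ∃ i : ℕ, w = List.ofFn fun k : Fin w.length => s (i + k.1)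

/-- `X` has finite deciphering delay. -/
def FiniteDecipheringDelay {A : Type*} (X : Set (List A)) : Prop :=
  ∃ k : ℕ, ∀ x ∈ X, ∀ x' ∈ X,
    (∃ (l l' : List (List A)) (r : List A),
      (∀ w ∈ l, w ∈ X) ∧ l.length = k ∧ (∀ w ∈ l', w ∈ X) ∧
      x ++ l.flatten ++ r = x' ++ l'.flatten) → x = x'

/-- The sequence `y = y₁y₂⋯ ∈ X^ω` is alternating. -/
def Alternating {A : Type*} (y : ℕ → List A) : Prop :=
  ∃ a b : A, a ≠ b ∧ ∃ (lam : List A) (idx : ℕ → ℕ), StrictMono idx ∧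
    ∀ k : ℕ, (lam ++ [a]) <+: y (idx (2 * k)) ∧ (lam ++ [b]) <+: y (idx (2 * k + 1))

/-- The infinite word `s` is ultimately periodic. -/
def UltimatelyPeriodic {A : Type*} (s : ℕ → A) : Prop :=
  ∃ p : ℕ, 0 < p ∧ ∃ N : ℕ, ∀ n ≥ N, s (n + p) = s n

/-- The infinite word `s` is uniformly recurrent: every factor occurs in every
sufficiently long factor of `s`. -/
def UniformlyRecurrent {A : Type*} (s : ℕ → A) : Prop :=
  ∀ w : List A, FactorOfInf w s →
    ∃ N : ℕ, ∀ i : ℕ, w <:+: List.ofFn fun k : Fin N => s (i + k.1)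

/-- Factor complexity of the infinite word `s`. -/
noncomputable def complexity {A : Type*} (s : ℕ → A) (n : ℕ) : ℕ :=
  {u : List A | u.length = n ∧ FactorOfInf u s}.ncard

/-- A word `w` is primitive if it is not a proper power. -/
def Primitive {A : Type*} (w : List A) : Prop :=
  ∀ (v : List A) (n : ℕ), 1 < n → w ≠ (List.replicate n v).flatten

lemma palClosure_spec {A : Type*} (w : List A) :
    ∃ k, (w.drop k).reverse = w.drop k ∧ palClosure w = w ++ (w.take k).reverse := by
  unfold palClosure
  letI : DecidablePred fun k => (w.drop k).reverse = w.drop k :=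
    fun _ => Classical.propDecidable _
  exact ⟨_, Nat.find_spec (⟨w.length, by simp⟩ :
    ∃ k, (w.drop k).reverse = w.drop k), rfl⟩

lemma palClosure_prefix {A : Type*} (w : List A) : w <+: palClosure w := by
  obtain ⟨k, _, h⟩ := palClosure_spec w
  rw [h]; exact ⟨_, rfl⟩

lemma palClosure_palindrome {A : Type*} (w : List A) :
    (palClosure w).reverse = palClosure w := by
  obtain ⟨k, hk, h⟩ := palClosure_spec w
  have h2 : w.reverse = w.drop k ++ (w.take k).reverse := by
    conv_lhs => rw [← List.take_append_drop k w]
    simp [hk]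
  rw [h, List.reverse_append, List.reverse_reverse, h2, ← List.append_assoc,
    List.take_append_drop]

theorem stmt5 {A : Type*} [Fintype A] (X : Set (List A)) (hX : IsCode X)
    (hdd : FiniteDecipheringDelay X)
    (y : ℕ → List A) (hy : ∀ i, y i ∈ X) (halt : Alternating y)
    (s : ℕ → A)
    (hs : ∀ n : ℕ, PrefixOfInf (psiList (List.ofFn fun i : Fin n => y i.1)) s) :
    ¬ UltimatelyPeriodic s := by
  
  classical
  obtain ⟨a, b, hab, lam, idx, hmono, hidx⟩ := halt
  rintro ⟨p, hp, N, hper⟩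
  set P : ℕ → List A := fun n => psiList (List.ofFn fun i : Fin n => y i.1) with hPdef
  have hPsucc : ∀ n, P (n+1) = palClosure (P n ++ y n) := by
    intro n
    show psiList (List.ofFn fun i : Fin (n+1) => y i.1)
      = palClosure (psiList (List.ofFn fun i : Fin n => y i.1) ++ y n)
    rw [List.ofFn_succ']
    show psiList (List.concat _ _) = _
    unfold psiList
    rw [List.concat_eq_append, List.foldl_append]
    rfl
  have hpal : ∀ n, (P n).reverse = P n := by
    intro n
    induction n with
    | zero => rfl
    | succ n ih => rw [hPsucc]; exact palClosure_palindrome _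
  have hpre : ∀ n, P n ++ y n <+: P (n+1) := fun n => by
    rw [hPsucc]; exact palClosure_prefix _
  have hlen : ∀ n, n ≤ (P n).length := by
    intro n
    induction n with
    | zero => exact Nat.zero_le _
    | succ n ih =>
      have h1 := (hpre n).length_le
      have h2 : y n ≠ [] := hX.1 _ (hy n)
      have h3 := List.length_pos_iff.mpr h2
      simp only [List.length_append] at h1
      omega
  have hmatch : ∀ n i, ∀ _ : i < (P n).length, s i = (P n)[i] := by
    intro n i h
    have := hs n i h
    rw [List.get_eq_getElem] at this
    exact this.symm
  have hrefl : ∀ n i, i < (P n).length → s i = s ((P n).length - 1 - i) := by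
    intro n i h
    have h2 : (P n).length - 1 - i < (P n).length := by omega
    have e1 : (P n)[i] = (P n).reverse[i]'(by simpa using h) :=
      List.getElem_of_eq (hpal n).symm h
    rw [List.getElem_reverse] at e1
    rw [hmatch n i h, hmatch n _ h2, e1]
  -- pure periodicity
  have hpp : ∀ i, s (i + p) = s i := by
    intro i
    have hLn : i + p + N + 1 ≤ (P (i + p + N + 1)).length := hlen _
    set L := (P (i + p + N + 1)).length with hL
    have h1 : i < L := by omega
    have h2 : i + p < L := by omega
    have e1 := hrefl _ i h1
    have e2 := hrefl _ (i + p) h2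
    have e3 := hper (L - 1 - (i + p)) (by omega)
    have e4 : L - 1 - (i + p) + p = L - 1 - i := by omega
    rw [e1, e2, ← e4, e3]
  have hex : ∃ r, 0 < r ∧ ∀ i, s (i + r) = s i := ⟨p, hp, hpp⟩
  set q := Nat.find hex with hqdef
  have hq0 : 0 < q := (Nat.find_spec hex).1
  have hqper : ∀ i, s (i + q) = s i := (Nat.find_spec hex).2
  have hqmin : ∀ r, 0 < r → (∀ i, s (i + r) = s i) → q ≤ r :=
    fun r h1 h2 => Nat.find_min' hex ⟨h1, h2⟩
  haveI : NeZero q := ⟨hq0.ne'⟩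
  have hmul : ∀ m i, s (i + m * q) = s i := by
    intro m
    induction m with
    | zero => simp
    | succ m ih =>
      intro i
      have e : i + (m+1) * q = (i + m * q) + q := by ring
      rw [e, hqper, ih]
  have hmodq : ∀ i, s i = s (i % q) := by
    intro i
    conv_lhs => rw [← Nat.mod_add_div i q, Nat.mul_comm]
    rw [hmul]
  have hsig : ∀ i : ℕ, s i = s ((i : ZMod q)).val := by
    intro i
    rw [ZMod.val_natCast]
    exact hmodq i
  -- pigeonhole: a residue attained by infinitely many palindromic prefix lengths
  obtain ⟨c, hc'⟩ := Finite.exists_infinite_fiber (fun n : ℕ => (((P n).length : ZMod q)))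
  have hc : Set.Infinite ((fun n : ℕ => (((P n).length : ZMod q))) ⁻¹' {c}) :=
    Set.infinite_coe_iff.mp hc'
  have hbig : ∀ M : ℕ, ∃ n, M < (P n).length ∧ ((P n).length : ZMod q) = c := by
    intro M
    obtain ⟨n, hn1, hn2⟩ := hc.exists_gt M
    simp only [Set.mem_preimage, Set.mem_singleton_iff] at hn1
    exact ⟨n, lt_of_lt_of_le hn2 (hlen n), hn1⟩
  -- global reflection
  have hGR : ∀ x z : ZMod q, x + z + 1 = c → s x.val = s z.val := by
    intro x z hxz
    obtain ⟨n, hn1, hn2⟩ := hbig (x.val + z.val + 1)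
    have hx : x.val < (P n).length := by omega
    have e1 := hrefl n x.val hx
    set L := (P n).length with hL
    obtain ⟨j, hj⟩ : ∃ j, L - 1 - x.val = j := ⟨_, rfl⟩
    rw [hj] at e1
    have h5 : j + x.val + 1 = L := by omega
    have hcast : ((j : ℕ) : ZMod q) + ((x.val : ℕ) : ZMod q) + 1
        = (L : ZMod q) := by
      rw [← h5]; push_cast; ring
    rw [ZMod.natCast_rightInverse x, hn2] at hcast
    have hzz : ((j : ℕ) : ZMod q) = z := by
      linear_combination hcast - hxz
    rw [e1, hsig j, hzz]
  -- all long palindromic prefix lengths have residue c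
  have hconst : ∀ m, q ≤ (P m).length → ((P m).length : ZMod q) = c := by
    intro m hm
    by_contra hne
    have hLR : ∀ x z : ZMod q, x + z + 1 = ((P m).length : ZMod q) →
        s x.val = s z.val := by
      intro x z hxz
      have hx : x.val < (P m).length := lt_of_lt_of_le (ZMod.val_lt x) hm
      have e1 := hrefl m x.val hx
      obtain ⟨j, hj⟩ : ∃ j, (P m).length - 1 - x.val = j := ⟨_, rfl⟩
      rw [hj] at e1
      have h5 : j + x.val + 1 = (P m).length := by omega
      have hcast : ((j : ℕ) : ZMod q) + ((x.val : ℕ) : ZMod q) + 1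
          = ((P m).length : ZMod q) := by
        rw [← h5]; push_cast; ring
      rw [ZMod.natCast_rightInverse x] at hcast
      have hzz : ((j : ℕ) : ZMod q) = z := by
        linear_combination hcast - hxz
      rw [e1, hsig j, hzz]
    set d : ZMod q := ((P m).length : ZMod q) - c with hd
    have hd0 : d ≠ 0 := by
      intro h
      rw [hd, sub_eq_zero] at h
      exact hne h
    have htrans : ∀ x : ZMod q, s (x + d).val = s x.val := by
      intro x
      have e1 : s x.val = s (c - 1 - x).val := hGR _ _ (by ring)
      have e2 : s (c - 1 - x).val = s (x + d).val := by
        refine hLR _ _ ?_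
        rw [hd]; ring
      exact (e1.trans e2).symm
    have ht : ∀ i, s (i + d.val) = s i := by
      intro i
      rw [hsig (i + d.val), hsig i]
      have hcast : ((i + d.val : ℕ) : ZMod q) = (i : ZMod q) + d := by
        push_cast
        rw [ZMod.natCast_rightInverse d]
      rw [hcast]
      exact htrans _
    have hdpos : 0 < d.val := by
      rcases Nat.eq_zero_or_pos d.val with h0 | h0
      · exact absurd ((ZMod.val_eq_zero d).mp h0) hd0
      · exact h0
    have h1 := hqmin d.val hdpos ht
    have h2 := ZMod.val_lt d
    omega
  -- occurrences of letters after prefixes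
  have hocc : ∀ n (w : List A), w <+: y n → ∀ i, ∀ h : i < w.length,
      s ((P n).length + i) = w[i] := by
    intro n w hw i h
    have h1 : P n ++ w <+: P (n+1) := by
      obtain ⟨t, ht⟩ := hw
      obtain ⟨t2, ht2⟩ := hpre n
      exact ⟨t ++ t2, by rw [← ht2, ← ht]; simp [List.append_assoc]⟩
    have hlt : (P n).length + i < (P n ++ w).length := by
      simp only [List.length_append]; omega
    have hlt2 : (P n).length + i < (P (n+1)).length := lt_of_lt_of_le hlt h1.length_le
    have e := hmatch (n+1) ((P n).length + i) hlt2
    rw [← h1.getElem hlt] at e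
    rw [e, List.getElem_append_right (by omega)]
    congr 1
    omega
  have ha : s ((P (idx (2*q))).length + lam.length) = a := by
    have h1 := (hidx q).1
    have h2 := hocc (idx (2*q)) (lam ++ [a]) h1 lam.length (by simp)
    simpa using h2
  have hb : s ((P (idx (2*q+1))).length + lam.length) = b := by
    have h1 := (hidx q).2
    have h2 := hocc (idx (2*q+1)) (lam ++ [b]) h1 lam.length (by simp)
    simpa using h2
  have hL1 : q ≤ (P (idx (2*q))).length :=
    le_trans (le_trans (by omega) hmono.le_apply) (hlen _)
  have hL2 : q ≤ (P (idx (2*q+1))).length :=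
    le_trans (le_trans (by omega) hmono.le_apply) (hlen _)
  have e1 := hconst _ hL1
  have e2 := hconst _ hL2
  have ecast : (((P (idx (2*q))).length + lam.length : ℕ) : ZMod q)
      = (((P (idx (2*q+1))).length + lam.length : ℕ) : ZMod q) := by
    push_cast
    rw [e1, e2]
  have efin : s ((P (idx (2*q))).length + lam.length)
      = s ((P (idx (2*q+1))).length + lam.length) := by
    rw [hsig ((P (idx (2*q))).length + lam.length),
      hsig ((P (idx (2*q+1))).length + lam.length), ecast]
  exact hab (by rw [← ha, ← hb, efin])
end

section
/- Let A = {a, b} be a binary alphabet and E the automorphism of A* interchanging a and b. If z ∈ A and w ∈ A* is not a power of z, then ψ(wz) = ψ(w) z E(z) ψ(w') for some prefix w' of w. -/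
open List

/-!
The closure of `ψ(w) z` mirrors what precedes the longest palindromic suffix of `ψ(w) z`, and
every palindromic suffix other than `z` itself has the form `z ψ(t) z` with `t z` a prefix of `w`.
Write `w = w' E(z) zᵐ`. If `m > 0`, the longest such `t` is `w' E(z) zᵐ⁻¹`; if `m = 0`, it is the
`q` with `w' = q z E(z)ᵏ` (and there is none if `w'` is a power of `E(z)`). In each case the
required longest suffix is read off from the formula for the shorter word, so induction on `w`
gives `ψ(wz) = ψ(w) z E(z) ψ(w')`.
-/

section

variable {A : Type*}

lemma reverse_eq_of_reverse_cons_append {x y : A} {S : List A}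
    (h : (x :: S ++ [y]).reverse = x :: S ++ [y]) : x = y ∧ S.reverse = S := by
  simp only [cons_append, reverse_cons, reverse_append, append_assoc] at h
  obtain ⟨rfl, h⟩ := List.cons_eq_cons.mp h
  exact ⟨rfl, append_cancel_right h⟩

lemma reverse_drop_eq_of_reverse_append_eq {W t : List A} (h : (W ++ t).reverse = W ++ t)
    (ht : t.length ≤ W.length) : (W.drop t.length).reverse = W.drop t.length := by
  rw [← take_append_drop t.length W, reverse_append, reverse_append] at h
  have hlen : t.reverse.length = (W.take t.length).length := by simp [ht]
  obtain ⟨-, h⟩ := append_inj (by simpa only [append_assoc] using h) hlen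
  exact append_inj_left h (by simp)

lemma palClosure_append_eq {u S : List A} (hS : S.reverse = S)
    (hlongest : ∀ j < u.length, ((u ++ S).drop j).reverse ≠ (u ++ S).drop j) :
    palClosure (u ++ S) = u ++ S ++ u.reverse := by
  classical
  have hex : ∃ k, ((u ++ S).drop k).reverse = (u ++ S).drop k := ⟨(u ++ S).length, by simp⟩
  have hfind : Nat.find hex = u.length :=
    le_antisymm (Nat.find_le (by simpa using hS))
      (not_lt.mp fun h => hlongest _ h (Nat.find_spec hex))
  unfold palClosure
  convert congrArg (fun k => u ++ S ++ ((u ++ S).take k).reverse) hfind using 4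
  · congr
  · simp

lemma exists_palClosure_eq (W : List A) :
    ∃ u S, W = u ++ S ∧ S.reverse = S ∧
      (∀ j < u.length, (W.drop j).reverse ≠ W.drop j) ∧ palClosure W = W ++ u.reverse := by
  classical
  have hex : ∃ k, (W.drop k).reverse = W.drop k := ⟨W.length, by simp⟩
  have hk : Nat.find hex ≤ W.length := Nat.find_le (by simp)
  have hlongest : ∀ j < (W.take (Nat.find hex)).length, (W.drop j).reverse ≠ W.drop j :=
    fun j hj => Nat.find_min hex (by simpa [hk] using hj)
  refine ⟨W.take (Nat.find hex), W.drop (Nat.find hex), (take_append_drop _ _).symm,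
    Nat.find_spec hex, hlongest, ?_⟩
  conv_lhs => rw [← take_append_drop (Nat.find hex) W]
  rw [palClosure_append_eq (Nat.find_spec hex) (by rwa [take_append_drop]), take_append_drop]

lemma reverse_palClosure (W : List A) : (palClosure W).reverse = palClosure W := by
  obtain ⟨u, S, rfl, hS, -, h⟩ := exists_palClosure_eq W
  simp [h, hS]

lemma prefix_palClosure (W : List A) : W <+: palClosure W := by
  obtain ⟨u, S, -, -, -, h⟩ := exists_palClosure_eq W
  exact h ▸ prefix_append _ _

lemma palClosure_eq_self {W : List A} (h : W.reverse = W) : palClosure W = W := by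
  simpa using palClosure_append_eq (u := []) h (by simp)

lemma length_palClosure_le {W Q : List A} (hQ : Q.reverse = Q) (hWQ : W <+: Q) :
    (palClosure W).length ≤ Q.length := by
  obtain ⟨t, rfl⟩ := hWQ
  obtain ⟨u, S, hW, -, hlongest, h⟩ := exists_palClosure_eq W
  have hu : u.length ≤ t.length := by
    by_contra! hlt
    have ht : t.length ≤ W.length := by rw [hW, length_append]; omega
    exact hlongest _ hlt (reverse_drop_eq_of_reverse_append_eq hQ ht)
  simp [h, hu]

lemma psiWord_append_singleton (w : List A) (a : A) :
    psiWord (w ++ [a]) = palClosure (psiWord w ++ [a]) := by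
  simp [psiWord, foldl_append]

lemma reverse_psiWord (w : List A) : (psiWord w).reverse = psiWord w := by
  rcases eq_nil_or_concat w with rfl | ⟨v, a, rfl⟩
  · simp [psiWord]
  · rw [concat_eq_append, psiWord_append_singleton]
    exact reverse_palClosure _

lemma psiWord_append_singleton_prefix (w : List A) (a : A) :
    psiWord w ++ [a] <+: psiWord (w ++ [a]) :=
  psiWord_append_singleton w a ▸ prefix_palClosure _

lemma psiWord_prefix_psiWord {v w : List A} (h : v <+: w) : psiWord v <+: psiWord w := by
  induction w using reverseRecOn generalizing v with
  | nil => rw [prefix_nil.mp h]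
  | append_singleton w a ih =>
    rcases prefix_concat_iff.mp h with rfl | hv
    · exact prefix_rfl
    · exact (ih hv).trans ((prefix_append _ [a]).trans (psiWord_append_singleton_prefix w a))

lemma psiWord_replicate (n : ℕ) (a : A) : psiWord (replicate n a) = replicate n a := by
  induction n with
  | zero => simp [psiWord]
  | succ n ih =>
    rw [replicate_succ', psiWord_append_singleton, ih]
    exact palClosure_eq_self (by simp [← replicate_succ'])

lemma exists_psiWord_eq_of_palindrome_prefix {q : List A} (hq : q.reverse = q) :
    ∀ {w : List A}, q <+: psiWord w → ∃ v, v <+: w ∧ psiWord v = q := by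
  intro w
  induction w using reverseRecOn with
  | nil => exact fun h => ⟨[], prefix_rfl, (prefix_nil.mp h).symm⟩
  | append_singleton w a ih =>
    intro h
    have hw := psiWord_append_singleton_prefix w a
    by_cases hlen : q.length ≤ (psiWord w).length
    · obtain ⟨v, hv, rfl⟩ :=
        ih (prefix_of_prefix_length_le h ((prefix_append _ _).trans hw) hlen)
      exact ⟨v, hv.trans (prefix_append _ _), rfl⟩
    · have hwq : psiWord w ++ [a] <+: q :=
        prefix_of_prefix_length_le hw h (by rw [length_append, length_singleton]; omega)
      refine ⟨w ++ [a], prefix_rfl, (h.eq_of_length (le_antisymm h.length_le ?_)).symm⟩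
      rw [psiWord_append_singleton]
      exact length_palClosure_le hq hwq

lemma append_singleton_prefix_of_psiWord {v w : List A} {a : A} (hvw : v <+: w)
    (h : psiWord v ++ [a] <+: psiWord w) : v ++ [a] <+: w := by
  obtain ⟨r, rfl⟩ := hvw
  rcases r with _ | ⟨b, r⟩
  · simpa using h.length_le
  have hvb : v ++ [b] <+: v ++ b :: r := ⟨r, by simp⟩
  have hb : psiWord v ++ [b] <+: psiWord (v ++ b :: r) :=
    (psiWord_append_singleton_prefix v b).trans (psiWord_prefix_psiWord hvb)
  obtain rfl : b = a := by
    simpa using (prefix_of_prefix_length_le hb h (by simp)).eq_of_length (by simp)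
  exact hvb

lemma exists_psiWord_eq_of_palindrome_suffix {w T : List A} {a b : A}
    (hpal : (b :: T ++ [a]).reverse = b :: T ++ [a]) (hsuf : b :: T <:+ psiWord w) :
    ∃ t, t ++ [a] <+: w ∧ psiWord t = T := by
  obtain ⟨rfl, hT⟩ := reverse_eq_of_reverse_cons_append hpal
  have hTb : T ++ [b] <+: psiWord w := by
    simpa [hT, reverse_psiWord] using hsuf.reverse
  obtain ⟨t, ht, rfl⟩ :=
    exists_psiWord_eq_of_palindrome_prefix hT ((prefix_append T [b]).trans hTb)
  exact ⟨t, append_singleton_prefix_of_psiWord ht hTb, rfl⟩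

lemma psiWord_append_singleton_eq {w u S : List A} {a : A} (hS : S.reverse = S)
    (hS₀ : S ≠ []) (hw : psiWord w ++ [a] = u ++ S)
    (hlongest : ∀ t, t ++ [a] <+: w → (psiWord t).length + 2 ≤ S.length) :
    psiWord (w ++ [a]) = psiWord w ++ [a] ++ u.reverse := by
  rw [psiWord_append_singleton, hw]
  refine palClosure_append_eq hS fun j hj hpal => ?_
  have hlen : (psiWord w).length + 1 = u.length + S.length := by
    simpa using congrArg length hw
  have hjw : j < (psiWord w).length := by
    have := length_pos_iff.mpr hS₀
    omega
  obtain ⟨b, T, hT⟩ := exists_cons_of_ne_nil (l := (psiWord w).drop j)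
    (by rw [ne_eq, drop_eq_nil_iff]; omega)
  rw [← hw, drop_append_of_le_length hjw.le, hT] at hpal
  obtain ⟨t, ht, rfl⟩ := exists_psiWord_eq_of_palindrome_suffix hpal (hT ▸ drop_suffix j _)
  have hT_len : (psiWord t).length + 1 = (psiWord w).length - j := by
    simpa using (congrArg length hT).symm
  have := hlongest t ht
  omega

lemma prefix_of_append_singleton_prefix_append_singleton {t v : List A} {a : A}
    (h : t ++ [a] <+: v ++ [a]) : t <+: v := by
  rcases prefix_concat_iff.mp h with h | h
  · exact append_inj_left' h rfl ▸ prefix_rfl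
  · exact (prefix_append _ _).trans h

lemma prefix_of_append_singleton_prefix_append_replicate {t q : List A} {a b : A} (hab : a ≠ b)
    (n : ℕ) (h : t ++ [a] <+: q ++ [a] ++ replicate n b) : t <+: q := by
  induction n with
  | zero => exact prefix_of_append_singleton_prefix_append_singleton (by simpa using h)
  | succ n ih =>
    rw [replicate_succ', ← append_assoc] at h
    rcases prefix_concat_iff.mp h with h | h
    · exact absurd (append_inj_right' h rfl) (by simpa using hab)
    · exact ih h

lemma psiWord_replicate_append_singleton {a b : A} (hab : a ≠ b) (n : ℕ) :
    psiWord (replicate n b ++ [a]) = replicate n b ++ [a] ++ replicate n b := by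
  have hlongest : ∀ t, t ++ [a] <+: replicate n b → (psiWord t).length + 2 ≤ 1 :=
    fun t ht => absurd (eq_of_mem_replicate (ht.subset (by simp))) hab
  simpa [psiWord_replicate] using
    psiWord_append_singleton_eq (u := replicate n b) (S := [a]) (by simp) (by simp)
      (by rw [psiWord_replicate]) hlongest

lemma psiWord_append_same_letter {v q : List A} {a b : A}
    (h : psiWord (v ++ [a]) = psiWord v ++ [a, b] ++ psiWord q) :
    psiWord (v ++ [a] ++ [a]) = psiWord (v ++ [a]) ++ [a, b] ++ psiWord q := by
  have h' : psiWord (v ++ [a]) ++ [a] = (psiWord q ++ [b]) ++ (a :: psiWord v ++ [a]) := by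
    rw [← reverse_psiWord (v ++ [a]), h]
    simp [reverse_psiWord]
  have hlongest : ∀ t, t ++ [a] <+: v ++ [a] →
      (psiWord t).length + 2 ≤ (a :: psiWord v ++ [a]).length := fun t ht => by
    simpa using (psiWord_prefix_psiWord
      (prefix_of_append_singleton_prefix_append_singleton ht)).length_le
  simpa [reverse_psiWord] using
    psiWord_append_singleton_eq (by simp [reverse_psiWord]) (by simp) h' hlongest

lemma psiWord_append_other_letter {v q : List A} {a b : A} (hab : a ≠ b) {k : ℕ}
    (hv : v = q ++ [a] ++ replicate k b)
    (h : psiWord (v ++ [b]) = psiWord v ++ [b, a] ++ psiWord q) :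
    psiWord (v ++ [b] ++ [a]) = psiWord (v ++ [b]) ++ [a, b] ++ psiWord v := by
  have h' : psiWord (v ++ [b]) ++ [a] = (psiWord v ++ [b]) ++ (a :: psiWord q ++ [a]) := by
    simp [h]
  have hlongest : ∀ t, t ++ [a] <+: v ++ [b] →
      (psiWord t).length + 2 ≤ (a :: psiWord q ++ [a]).length := fun t ht => by
    rw [hv, append_assoc, ← replicate_succ'] at ht
    simpa using (psiWord_prefix_psiWord
      (prefix_of_append_singleton_prefix_append_replicate hab _ ht)).length_le
  simpa [reverse_psiWord] using
    psiWord_append_singleton_eq (by simp [reverse_psiWord]) (by simp) h' hlongest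

end

theorem exists_psiWord_append_singleton_eq (w : List Bool) (z : Bool)
    (hw : ∀ n, w ≠ replicate n z) :
    ∃ w' m, w = w' ++ [!z] ++ replicate m z ∧
      psiWord (w ++ [z]) = psiWord w ++ [z, !z] ++ psiWord w' := by
  induction w using reverseRecOn generalizing z with
  | nil => exact absurd rfl (hw 0)
  | append_singleton v c ih =>
    by_cases hcz : c = z
    · subst hcz
      obtain ⟨w', m, rfl, h⟩ := ih c fun n hn => hw (n + 1) (by rw [hn, replicate_succ'])
      exact ⟨w', m + 1, by simp [replicate_succ'], psiWord_append_same_letter h⟩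
    obtain rfl : c = !z := Bool.eq_not.mpr hcz
    refine ⟨v, 0, by simp, ?_⟩
    by_cases hv : ∃ n, v = replicate n (!z)
    · obtain ⟨n, rfl⟩ := hv
      rw [← replicate_succ', psiWord_replicate, psiWord_replicate_append_singleton (by simp),
        psiWord_replicate, replicate_succ]
      simp
    · push Not at hv
      obtain ⟨q, k, hvq, h⟩ := ih (!z) hv
      rw [Bool.not_not] at hvq h
      exact psiWord_append_other_letter (by simp) hvq h

/-- Over the binary alphabet (here `Bool`, with `E` the letter
exchange `!`), if `z` is a letter and `w` is not a power of `z`, then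
`ψ(wz) = ψ(w) z E(z) ψ(w')` for some prefix `w'` of `w`. -/
theorem stmt6 (z : Bool) (w : List Bool) (hw : ∀ n : ℕ, w ≠ List.replicate n z) :
    ∃ w' : List Bool, w' <+: w ∧
      psiWord (w ++ [z]) = psiWord w ++ [z, !z] ++ psiWord w' := by
  obtain ⟨w', m, hw', h⟩ := exists_psiWord_append_singleton_eq w z hw
  exact ⟨w', hw' ▸ (prefix_append _ _).trans (prefix_append _ _), h⟩
end
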